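/- First-order commutator bound used in the proofs of Lemma 2.2 and Proposition 2.4: Let α, β, α' ∈ ℕ³ be multi-indices with α' < α, and set θ := max(|α|, |β|). There exists a constant C, depending only on α, β, α', such that for all ℤ³-periodic smooth vector fields ξ and f: |⟨D^β f, B_{D^{α−α'}ξ}(𝓛_ξ(D^{α'} f)) − 𝓛_ξ(B_{D^{α−α'}ξ}(D^{α'} f))⟩_{L²}| ≤ C ‖ξ‖_{W^{θ+2,∞}}² ‖f‖_{W^{θ,2}}². -/

import Mathlib

/-!
With `η := D^{α-α'} ξ` and `g := D^{α'} f`, the commutator `B_η 𝓛_ξ g - 𝓛_ξ B_η g` is a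
first-order operator in `g`: its second-order part `η^j ξ^k (∂_j∂_k - ∂_k∂_j) g` vanishes by
symmetry of mixed partials. What remains is, in each of the `3³` index triples, three products of
two factors among `ξ, ∇ξ, η, ∇η, ∇²η` (each bounded by `‖ξ‖_{W^{θ+2,∞}}`) with `g` or `∇g`.
Since `|α'| < |α|`, these and `D^β f` are derivatives of `f` of order at most `θ`, so the
integrand is pointwise at most `81 ‖ξ‖² Σ_{|γ|≤θ} |D^γ f|²`; integrating over the cell gives
`C = 81`.
-/

open MeasureTheory

noncomputable section

/-- Points of ℝ³ (as `Fin 3 → ℝ`). -/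
abbrev V3 := Fin 3 → ℝ
/-- Vector fields on ℝ³. -/
abbrev VF := V3 → V3

/-- Smoothness of a vector field. -/
def SmoothVF (f : VF) : Prop := ContDiff ℝ (⊤ : ℕ∞) f

/-- Smoothness of a scalar function. -/
def SmoothS (p : V3 → ℝ) : Prop := ContDiff ℝ (⊤ : ℕ∞) p

/-- The periodicity cell [0,1)³. -/
def cube : Set V3 := Set.univ.pi fun _ => Set.Ico (0:ℝ) 1

/-- Partial derivative in the j-th coordinate, acting componentwise. -/
def pd (j : Fin 3) (f : VF) : VF := fun x => fderiv ℝ f x (Pi.single j 1)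

/-- Iterated derivative D^α = ∂₁^{α₁}∂₂^{α₂}∂₃^{α₃} for a multi-index α = (α₁, α₂, α₃). -/
def Dm (α : ℕ × ℕ × ℕ) (f : VF) : VF :=
  (pd 0)^[α.1] ((pd 1)^[α.2.1] ((pd 2)^[α.2.2] f))

/-- The order |α| of a multi-index. -/
def mdeg (α : ℕ × ℕ × ℕ) : ℕ := α.1 + α.2.1 + α.2.2

/-- ℤ³-periodicity of a vector field. -/
def Periodic3 (f : VF) : Prop :=
  ∀ (x : V3) (k : Fin 3 → ℤ), f (x + fun i => (k i : ℝ)) = f x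

/-- ℤ³-periodicity of a scalar function. -/
def PeriodicS (p : V3 → ℝ) : Prop :=
  ∀ (x : V3) (k : Fin 3 → ℤ), p (x + fun i => (k i : ℝ)) = p x

/-- Divergence-free: Σ_j ∂_j f^j ≡ 0. -/
def DivFree (f : VF) : Prop := ∀ x, ∑ j, pd j f x j = 0

/-- Mean-zero over the periodicity cell. -/
def MeanZero (f : VF) : Prop := (∫ x in cube, f x) = 0

/-- The L² inner product over the periodicity cell. -/
def L2inner (f g : VF) : ℝ := ∫ x in cube, ∑ i, f x i * g x i

/-- The finite set of multi-indices of order at most m. -/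
def midx (m : ℕ) : Finset (ℕ × ℕ × ℕ) :=
  (Finset.range (m+1) ×ˢ Finset.range (m+1) ×ˢ Finset.range (m+1)).filter
    fun α => mdeg α ≤ m

lemma midx_nonempty (m : ℕ) : (midx m).Nonempty :=
  ⟨(0,0,0), by unfold midx; exact Finset.mem_filter.mpr ⟨by simp, by simp [mdeg]⟩⟩

/-- The W^{m,2} inner product ⟨f,g⟩_{W^{m,2}} = Σ_{|α|≤m} ⟨D^α f, D^α g⟩_{L²}. -/
def sobInner (m : ℕ) (f g : VF) : ℝ := ∑ α ∈ midx m, L2inner (Dm α f) (Dm α g)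

/-- The squared W^{m,2} norm. -/
def sobNormSq (m : ℕ) (f : VF) : ℝ := sobInner m f f

/-- The W^{k,∞} norm: max over |α| ≤ k of sup_x |D^α ξ(x)|. -/
def WinfNorm (k : ℕ) (ξ : VF) : ℝ :=
  (midx k).sup' (midx_nonempty k) fun α => ⨆ x, ‖Dm α ξ x‖

/-- The transport operator 𝓛_ξ f = Σ_j ξ^j ∂_j f. -/
def transport (ξ f : VF) : VF := fun x => ∑ j, ξ x j • pd j f x

/-- The stretching operator 𝓣_ξ f, with l-th component Σ_j f^j ∂_l ξ^j. -/
def stretch (ξ f : VF) : VF := fun x l => ∑ j, f x j * pd l ξ x j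

/-- The L²-adjoint 𝓣*_ξ g, with j-th component Σ_l g^l ∂_l ξ^j. -/
def stretchStar (ξ g : VF) : VF := fun x j => ∑ l, g x l * pd l ξ x j

/-- The transport–stretching operator B_ξ = 𝓛_ξ + 𝓣_ξ. -/
def Bop (ξ f : VF) : VF := fun x => transport ξ f x + stretch ξ f x

/-- The gradient of a scalar function. -/
def grad (p : V3 → ℝ) : VF := fun x i => fderiv ℝ p x (Pi.single i 1)

/-- `IsLeray u g` : g is the Leray projection 𝒫u of u, i.e. g is a ℤ³-periodic smooth
divergence-free mean-zero field and u − g = ∇p + c for some ℤ³-periodic smooth scalar p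
and constant vector c. -/
def IsLeray (u g : VF) : Prop :=
  Periodic3 g ∧ SmoothVF g ∧ DivFree g ∧ MeanZero g ∧
  ∃ (p : V3 → ℝ) (c : V3), PeriodicS p ∧ SmoothS p ∧
    ∀ x, u x - g x = grad p x + c

/-- The componentwise Laplacian. -/
def lap (f : VF) : VF := fun x => ∑ j, pd j (pd j f) x

/-- The Stokes inner product ⟨u,v⟩_{A^{m/2}}. -/
def stokesInner (m : ℕ) (u v : VF) : ℝ :=
  if m % 2 = 0 then L2inner (lap^[m/2] u) (lap^[m/2] v)
  else ∑ j : Fin 3, L2inner (pd j (lap^[m/2] u)) (pd j (lap^[m/2] v))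

/-- A ℤ³-periodic smooth divergence-free mean-zero vector field. -/
def GoodField (f : VF) : Prop :=
  Periodic3 f ∧ SmoothVF f ∧ DivFree f ∧ MeanZero f

def unitIdx : Fin 3 → ℕ × ℕ × ℕ := ![(1, 0, 0), (0, 1, 0), (0, 0, 1)]

lemma mdeg_add_unitIdx (γ : ℕ × ℕ × ℕ) (j : Fin 3) : mdeg (γ + unitIdx j) = mdeg γ + 1 := by
  obtain ⟨a, b, c⟩ := γ
  fin_cases j <;> simp [mdeg, unitIdx] <;> omega

lemma mdeg_lt_of_le_of_ne {α' α : ℕ × ℕ × ℕ} (hle : α' ≤ α) (hne : α' ≠ α) :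
    mdeg α' < mdeg α := by
  obtain ⟨a', b', c'⟩ := α'
  obtain ⟨a, b, c⟩ := α
  simp only [Prod.mk_le_mk] at hle
  simp only [ne_eq, Prod.mk.injEq] at hne
  simp only [mdeg]
  omega

lemma mdeg_tsub_le (α α' : ℕ × ℕ × ℕ) : mdeg (α - α') ≤ mdeg α := by
  obtain ⟨a', b', c'⟩ := α'
  obtain ⟨a, b, c⟩ := α
  simp only [mdeg, Prod.mk_sub_mk]
  omega

lemma mem_midx_of_mdeg_le {γ : ℕ × ℕ × ℕ} {m : ℕ} (h : mdeg γ ≤ m) : γ ∈ midx m := by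
  obtain ⟨a, b, c⟩ := γ
  simp only [mdeg] at h
  refine Finset.mem_filter.mpr ⟨?_, h⟩
  simp only [Finset.mem_product, Finset.mem_range]
  omega

lemma pd_apply {f : VF} (hf : Differentiable ℝ f) (j i : Fin 3) (x : V3) :
    pd j f x i = fderiv ℝ (fun y => f y i) x (Pi.single j 1) := by
  rw [fderiv_apply (hf x) i]
  rfl

lemma pd_add {f g : VF} (hf : Differentiable ℝ f) (hg : Differentiable ℝ g) (j : Fin 3) :
    pd j (f + g) = pd j f + pd j g := by
  funext x
  simp [pd, fderiv_add (hf x) (hg x)]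

lemma SmoothVF.pd {f : VF} (hf : SmoothVF f) (j : Fin 3) : SmoothVF (pd j f) :=
  (hf.fderiv_right (mod_cast le_top)).clm_apply contDiff_const

lemma SmoothVF.differentiable {f : VF} (hf : SmoothVF f) : Differentiable ℝ f :=
  ContDiff.differentiable hf (by simp)

lemma SmoothVF.differentiable_apply {f : VF} (hf : SmoothVF f) (i : Fin 3) :
    Differentiable ℝ (fun y => f y i) :=
  differentiable_pi.1 hf.differentiable i

lemma SmoothVF.iterate_pd {f : VF} (hf : SmoothVF f) (k : Fin 3) (n : ℕ) :
    SmoothVF ((_root_.pd k)^[n] f) := by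
  induction n with
  | zero => exact hf
  | succ n ih => rw [Function.iterate_succ_apply']; exact ih.pd k

lemma SmoothVF.Dm {f : VF} (hf : SmoothVF f) (γ : ℕ × ℕ × ℕ) : SmoothVF (Dm γ f) :=
  ((hf.iterate_pd 2 _).iterate_pd 1 _).iterate_pd 0 _

lemma pd_pd_eq_fderiv_fderiv {f : VF} (hf : SmoothVF f) (j k : Fin 3) (x : V3) :
    pd j (pd k f) x = fderiv ℝ (fderiv ℝ f) x (Pi.single j 1) (Pi.single k 1) := by
  have hd : DifferentiableAt ℝ (fderiv ℝ f) x :=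
    (hf.fderiv_right (m := (⊤ : ℕ∞)) (mod_cast le_top)).differentiable (by simp) x
  show fderiv ℝ (fun y => fderiv ℝ f y (Pi.single k 1)) x (Pi.single j 1) = _
  rw [fderiv_clm_apply hd (differentiableAt_const _)]
  simp

lemma pd_comm {f : VF} (hf : SmoothVF f) (j k : Fin 3) : pd j (pd k f) = pd k (pd j f) := by
  funext x
  have hsymm : IsSymmSndFDerivAt ℝ f x := (hf.contDiffAt (x := x)).isSymmSndFDerivAt <| by
    rw [minSmoothness_of_isRCLikeNormedField]
    exact WithTop.coe_le_coe.2 le_top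
  rw [pd_pd_eq_fderiv_fderiv hf, pd_pd_eq_fderiv_fderiv hf, hsymm]

lemma pd_iterate_comm {f : VF} (hf : SmoothVF f) (j k : Fin 3) (n : ℕ) :
    pd j ((pd k)^[n] f) = (pd k)^[n] (pd j f) := by
  induction n with
  | zero => rfl
  | succ n ih =>
    rw [Function.iterate_succ_apply', Function.iterate_succ_apply',
      pd_comm (hf.iterate_pd k n) j k, ih]

lemma pd_Dm {f : VF} (hf : SmoothVF f) (j : Fin 3) (γ : ℕ × ℕ × ℕ) :
    pd j (Dm γ f) = Dm (γ + unitIdx j) f := by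
  obtain ⟨a, b, c⟩ := γ
  fin_cases j
  · show pd 0 (Dm (a, b, c) f) = Dm (a + 1, b + 0, c + 0) f
    simp only [Dm, Function.iterate_succ_apply']
    rfl
  · show pd 1 (Dm (a, b, c) f) = Dm (a + 0, b + 1, c + 0) f
    simp only [Dm]
    rw [pd_iterate_comm ((hf.iterate_pd 2 c).iterate_pd 1 b) 1 0 a,
      Function.iterate_succ_apply']
    rfl
  · show pd 2 (Dm (a, b, c) f) = Dm (a + 0, b + 0, c + 1) f
    simp only [Dm]
    rw [pd_iterate_comm ((hf.iterate_pd 2 c).iterate_pd 1 b) 2 0 a,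
      pd_iterate_comm (hf.iterate_pd 2 c) 2 1 b, Function.iterate_succ_apply']
    rfl

lemma Periodic3.pd {f : VF} (hf : Periodic3 f) (j : Fin 3) : Periodic3 (pd j f) := by
  intro x k
  have hshift : (fun y => f (y + fun i => (k i : ℝ))) = f := funext fun y => hf y k
  simp only [_root_.pd, ← fderiv_comp_add_right, hshift]

lemma Periodic3.iterate_pd {f : VF} (hf : Periodic3 f) (k : Fin 3) (n : ℕ) :
    Periodic3 ((_root_.pd k)^[n] f) := by
  induction n with
  | zero => exact hf
  | succ n ih => rw [Function.iterate_succ_apply']; exact ih.pd k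

lemma Periodic3.Dm {f : VF} (hf : Periodic3 f) (γ : ℕ × ℕ × ℕ) : Periodic3 (Dm γ f) :=
  ((hf.iterate_pd 2 _).iterate_pd 1 _).iterate_pd 0 _

lemma Periodic3.bddAbove_range_norm {f : VF} (hp : Periodic3 f) (hc : Continuous f) :
    BddAbove (Set.range fun x => ‖f x‖) := by
  refine BddAbove.mono ?_ ((isCompact_Icc (a := (0 : V3)) (b := 1)).image hc.norm).bddAbove
  rintro - ⟨x, rfl⟩
  refine ⟨fun i => Int.fract (x i), ⟨fun i => Int.fract_nonneg _,
    fun i => (Int.fract_lt_one _).le⟩, ?_⟩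
  show ‖f _‖ = ‖f x‖
  rw [← hp x (fun i => -⌊x i⌋)]
  congr 2
  funext i
  simp [Int.fract, sub_eq_add_neg]

section WinfNorm

variable {ξ : VF} (hξ : SmoothVF ξ) (hp : Periodic3 ξ) {m : ℕ}
include hξ hp

lemma abs_Dm_le_WinfNorm {γ : ℕ × ℕ × ℕ} (hγ : mdeg γ ≤ m) (x : V3) (j : Fin 3) :
    |Dm γ ξ x j| ≤ WinfNorm m ξ :=
  calc |Dm γ ξ x j| ≤ ‖Dm γ ξ x‖ := by simpa using norm_le_pi_norm (Dm γ ξ x) j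
    _ ≤ ⨆ y, ‖Dm γ ξ y‖ := le_ciSup ((hp.Dm γ).bddAbove_range_norm (hξ.Dm γ).continuous) x
    _ ≤ WinfNorm m ξ := Finset.le_sup' (fun γ => ⨆ y, ‖Dm γ ξ y‖) (mem_midx_of_mdeg_le hγ)

lemma abs_pd_Dm_le_WinfNorm {γ : ℕ × ℕ × ℕ} (hγ : mdeg γ + 1 ≤ m) (x : V3) (k j : Fin 3) :
    |pd k (Dm γ ξ) x j| ≤ WinfNorm m ξ := by
  rw [pd_Dm hξ]
  exact abs_Dm_le_WinfNorm hξ hp (by rwa [mdeg_add_unitIdx]) x j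

lemma abs_pd_pd_Dm_le_WinfNorm {γ : ℕ × ℕ × ℕ} (hγ : mdeg γ + 2 ≤ m) (x : V3) (k i j : Fin 3) :
    |pd k (pd i (Dm γ ξ)) x j| ≤ WinfNorm m ξ := by
  rw [pd_Dm hξ, pd_Dm hξ]
  exact abs_Dm_le_WinfNorm hξ hp (by rw [mdeg_add_unitIdx, mdeg_add_unitIdx]; omega) x j

end WinfNorm

lemma transport_apply (ξ g : VF) (x : V3) (i : Fin 3) :
    transport ξ g x i = ∑ k, ξ x k * pd k g x i := by
  simp [transport]

lemma transport_add {f g : VF} (hf : Differentiable ℝ f) (hg : Differentiable ℝ g) (ξ : VF) :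
    transport ξ (f + g) = transport ξ f + transport ξ g := by
  funext x
  simp [transport, pd_add hf hg, smul_add, Finset.sum_add_distrib]

lemma SmoothVF.transport {ξ g : VF} (hξ : SmoothVF ξ) (hg : SmoothVF g) :
    SmoothVF (transport ξ g) :=
  ContDiff.sum fun j _ => (contDiff_apply ℝ ℝ j |>.comp hξ).smul (hg.pd j)

lemma SmoothVF.stretch {η g : VF} (hη : SmoothVF η) (hg : SmoothVF g) :
    SmoothVF (stretch η g) :=
  contDiff_pi.2 fun l => ContDiff.sum fun j _ =>
    (contDiff_apply ℝ ℝ j |>.comp hg).mul (contDiff_apply ℝ ℝ j |>.comp (hη.pd l))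

lemma fderiv_sum_mul {a b : Fin 3 → V3 → ℝ} (ha : ∀ k, Differentiable ℝ (a k))
    (hb : ∀ k, Differentiable ℝ (b k)) (x v : V3) :
    fderiv ℝ (fun y => ∑ k, a k y * b k y) x v
      = ∑ k, (fderiv ℝ (a k) x v * b k x + a k x * fderiv ℝ (b k) x v) := by
  rw [fderiv_fun_sum (A := fun k y => a k y * b k y) fun k _ => (ha k x).mul (hb k x)]
  simp only [FunLike.coe_sum, Finset.sum_apply, fderiv_fun_mul (ha _ x) (hb _ x),
    add_apply, smul_apply, smul_eq_mul]
  exact Finset.sum_congr rfl fun k _ => by ring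

lemma pd_transport_apply {ξ g : VF} (hξ : SmoothVF ξ) (hg : SmoothVF g) (m i : Fin 3) (x : V3) :
    pd m (transport ξ g) x i
      = ∑ k, (pd m ξ x k * pd k g x i + ξ x k * pd m (pd k g) x i) := by
  rw [pd_apply (hξ.transport hg).differentiable, funext fun y => transport_apply ξ g y i,
    fderiv_sum_mul hξ.differentiable_apply fun k => (hg.pd k).differentiable_apply i]
  simp only [← pd_apply hξ.differentiable, ← pd_apply (hg.pd _).differentiable]

lemma pd_stretch_apply {η g : VF} (hη : SmoothVF η) (hg : SmoothVF g) (m i : Fin 3) (x : V3) :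
    pd m (stretch η g) x i
      = ∑ j, (pd m g x j * pd i η x j + g x j * pd m (pd i η) x j) := by
  rw [pd_apply (hη.stretch hg).differentiable]
  show fderiv ℝ (fun y => ∑ j, g y j * pd i η y j) x _ = _
  rw [fderiv_sum_mul hg.differentiable_apply (hη.pd i).differentiable_apply]
  simp only [← pd_apply hg.differentiable, ← pd_apply (hη.pd i).differentiable]

lemma transport_comm_apply {ξ η g : VF} (hξ : SmoothVF ξ) (hη : SmoothVF η) (hg : SmoothVF g)
    (x : V3) (i : Fin 3) :
    transport η (transport ξ g) x i - transport ξ (transport η g) x i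
      = ∑ j, ∑ k, (η x j * pd j ξ x k * pd k g x i - ξ x k * pd k η x j * pd j g x i) := by
  simp only [transport_apply, pd_transport_apply hξ hg, pd_transport_apply hη hg,
    Fin.sum_univ_three]
  rw [pd_comm hg 1 0, pd_comm hg 2 0, pd_comm hg 2 1]
  ring

lemma stretch_transport_comm_apply {ξ η g : VF} (hη : SmoothVF η) (hg : SmoothVF g)
    (x : V3) (i : Fin 3) :
    stretch η (transport ξ g) x i - transport ξ (stretch η g) x i
      = -∑ j, ∑ k, ξ x k * pd k (pd i η) x j * g x j := by
  simp only [stretch, transport_apply, pd_stretch_apply hη hg, Fin.sum_univ_three]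
  ring

lemma Bop_transport_comm_apply {ξ η g : VF} (hξ : SmoothVF ξ) (hη : SmoothVF η)
    (hg : SmoothVF g) (x : V3) (i : Fin 3) :
    Bop η (transport ξ g) x i - transport ξ (Bop η g) x i
      = ∑ j, ∑ k, (η x j * pd j ξ x k * pd k g x i - ξ x k * pd k η x j * pd j g x i
          - ξ x k * pd k (pd i η) x j * g x j) := by
  have hB : Bop η g = transport η g + stretch η g := rfl
  rw [hB, transport_add (hη.transport hg).differentiable (hη.stretch hg).differentiable]
  have h₁ := transport_comm_apply hξ hη hg x i
  have h₂ := stretch_transport_comm_apply (ξ := ξ) hη hg x i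
  simp only [Finset.sum_sub_distrib] at h₁ ⊢
  simp only [Bop, Pi.add_apply]
  linarith

lemma abs_mul_mul_mul_mul_le {a b c d N s : ℝ} (hc : |c| ≤ N) (hd : |d| ≤ N)
    (ha : a * a ≤ s) (hb : b * b ≤ s) : |a * (c * d * b)| ≤ N ^ 2 * s := by
  have hab : |a| * |b| ≤ s := by
    nlinarith [abs_mul_abs_self a, abs_mul_abs_self b, sq_nonneg (|a| - |b|)]
  have hcd : |c| * |d| ≤ N ^ 2 := by nlinarith [abs_nonneg c, abs_nonneg d]
  rw [abs_mul, abs_mul, abs_mul]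
  nlinarith [abs_nonneg a, abs_nonneg b, abs_nonneg c, abs_nonneg d,
    mul_nonneg (abs_nonneg a) (abs_nonneg b)]

lemma abs_sum_fin_three_le {F : Fin 3 → ℝ} {B : ℝ} (h : ∀ i, |F i| ≤ B) :
    |∑ i, F i| ≤ 3 * B := by
  simpa using norm_sum_le_of_le Finset.univ fun i _ => (Real.norm_eq_abs (F i)).trans_le (h i)

lemma abs_sum_mul_Bop_transport_comm_le {ξ η g : VF} (hξ : SmoothVF ξ) (hη : SmoothVF η)
    (hg : SmoothVF g) (v x : V3) {N s : ℝ}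
    (hξN : ∀ k, |ξ x k| ≤ N) (hdξN : ∀ j k, |pd j ξ x k| ≤ N)
    (hηN : ∀ j, |η x j| ≤ N) (hdηN : ∀ k j, |pd k η x j| ≤ N)
    (hddηN : ∀ k i j, |pd k (pd i η) x j| ≤ N)
    (hv : ∀ i, v i * v i ≤ s) (hg₀ : ∀ i, g x i * g x i ≤ s)
    (hg₁ : ∀ k i, pd k g x i * pd k g x i ≤ s) :
    |∑ i, v i * (Bop η (transport ξ g) x i - transport ξ (Bop η g) x i)| ≤ 81 * N ^ 2 * s := by
  have hterm : ∀ i j k, |v i * (η x j * pd j ξ x k * pd k g x i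
      - ξ x k * pd k η x j * pd j g x i - ξ x k * pd k (pd i η) x j * g x j)|
        ≤ 3 * (N ^ 2 * s) := by
    intro i j k
    have h₁ := abs_mul_mul_mul_mul_le (hηN j) (hdξN j k) (hv i) (hg₁ k i)
    have h₂ := abs_mul_mul_mul_mul_le (hξN k) (hdηN k j) (hv i) (hg₁ j i)
    have h₃ := abs_mul_mul_mul_mul_le (hξN k) (hddηN k i j) (hv i) (hg₀ j)
    rw [mul_sub, mul_sub]
    linarith [abs_sub (v i * (η x j * pd j ξ x k * pd k g x i)
        - v i * (ξ x k * pd k η x j * pd j g x i)) (v i * (ξ x k * pd k (pd i η) x j * g x j)),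
      abs_sub (v i * (η x j * pd j ξ x k * pd k g x i)) (v i * (ξ x k * pd k η x j * pd j g x i))]
  simp only [Bop_transport_comm_apply hξ hη hg, Finset.mul_sum]
  have := abs_sum_fin_three_le fun i => abs_sum_fin_three_le fun j =>
    abs_sum_fin_three_le fun k => hterm i j k
  linarith

def sobDensity (m : ℕ) (f : VF) (x : V3) : ℝ := ∑ γ ∈ midx m, ∑ i, Dm γ f x i * Dm γ f x i

lemma mul_self_le_sobDensity (f : VF) {γ : ℕ × ℕ × ℕ} {m : ℕ} (hγ : mdeg γ ≤ m) (x : V3)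
    (i : Fin 3) : Dm γ f x i * Dm γ f x i ≤ sobDensity m f x :=
  calc Dm γ f x i * Dm γ f x i ≤ ∑ i', Dm γ f x i' * Dm γ f x i' :=
        Finset.single_le_sum (fun i' _ => mul_self_nonneg (Dm γ f x i')) (Finset.mem_univ i)
    _ ≤ sobDensity m f x :=
        Finset.single_le_sum (f := fun γ => ∑ i', Dm γ f x i' * Dm γ f x i')
          (fun _ _ => Finset.sum_nonneg fun _ _ => mul_self_nonneg _) (mem_midx_of_mdeg_le hγ)

lemma integrableOn_cube {G : V3 → ℝ} (hG : Continuous G) : IntegrableOn G cube :=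
  (hG.continuousOn.integrableOn_compact isCompact_Icc).mono_set
    fun _ hx => ⟨fun i => (hx i trivial).1, fun i => (hx i trivial).2.le⟩

lemma continuous_sum_mul_self {f : VF} (hf : Continuous f) :
    Continuous fun x => ∑ i, f x i * f x i :=
  continuous_finsetSum _ fun i _ =>
    ((continuous_apply i).comp hf).mul ((continuous_apply i).comp hf)

lemma SmoothVF.continuous_sobDensity {f : VF} (hf : SmoothVF f) (m : ℕ) :
    Continuous (sobDensity m f) :=
  continuous_finsetSum _ fun γ _ => continuous_sum_mul_self (hf.Dm γ).continuous

lemma SmoothVF.integral_sobDensity {f : VF} (hf : SmoothVF f) (m : ℕ) :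
    ∫ x in cube, sobDensity m f x = sobNormSq m f :=
  integral_finsetSum _ fun γ _ => integrableOn_cube (continuous_sum_mul_self (hf.Dm γ).continuous)

lemma abs_L2inner_le_integral {F G : VF} {S : V3 → ℝ} (hS : Continuous S)
    (h : ∀ x, |∑ i, F x i * G x i| ≤ S x) : |L2inner F G| ≤ ∫ x in cube, S x :=
  abs_integral_le_integral_abs.trans <|
    integral_mono_of_nonneg (.of_forall fun _ => abs_nonneg _) (integrableOn_cube hS)
      (.of_forall h)

/-- First-order commutator bound used in the proofs of Lemma 2.2 and Proposition 2.4. -/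
theorem stmt15 (α β α' : ℕ × ℕ × ℕ) (hle : α' ≤ α) (hne : α' ≠ α) :
    ∃ C : ℝ, ∀ ξ f : VF, Periodic3 ξ → SmoothVF ξ → Periodic3 f → SmoothVF f →
      |L2inner (Dm β f)
          (fun x => Bop (Dm (α - α') ξ) (transport ξ (Dm α' f)) x
            - transport ξ (Bop (Dm (α - α') ξ) (Dm α' f)) x)| ≤
      C * WinfNorm (max (mdeg α) (mdeg β) + 2) ξ ^ 2
        * sobNormSq (max (mdeg α) (mdeg β)) f := by
  refine ⟨81, fun ξ f hpξ hξ _ hf => ?_⟩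
  set θ := max (mdeg α) (mdeg β)
  have hα : mdeg α ≤ θ := le_max_left _ _
  have hα' : mdeg α' + 1 ≤ θ := (mdeg_lt_of_le_of_ne hle hne).trans_le hα
  have hγ : mdeg (α - α') + 2 ≤ θ + 2 := by have := mdeg_tsub_le α α'; omega
  rw [← hf.integral_sobDensity, ← integral_const_mul]
  refine abs_L2inner_le_integral (continuous_const.mul (hf.continuous_sobDensity θ)) fun x =>
    abs_sum_mul_Bop_transport_comm_le hξ (hξ.Dm _) (hf.Dm _) _ x
      (abs_Dm_le_WinfNorm hξ hpξ (γ := 0) (by simp [mdeg]) x)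
      (abs_pd_Dm_le_WinfNorm hξ hpξ (γ := 0) (by simp [mdeg]) x)
      (abs_Dm_le_WinfNorm hξ hpξ (by omega) x)
      (abs_pd_Dm_le_WinfNorm hξ hpξ (by omega) x)
      (abs_pd_pd_Dm_le_WinfNorm hξ hpξ hγ x)
      (mul_self_le_sobDensity f (le_max_right _ _) x)
      (mul_self_le_sobDensity f (by omega) x)
      fun k => ?_
  rw [pd_Dm hf]
  exact mul_self_le_sobDensity f (by rw [mdeg_add_unitIdx]; exact hα') x
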